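/- The canonical inclusion σ_v : R[x^{-1},y^{-1}] → Čech(D_v) of the polynomial ring into the Čech complex of the diagram of Novikov rings indexed by the nerve of the star of the vertex v = (1,1) of the square is a quasi-isomorphism, i.e. the Čech complex has cohomology R[x^{-1},y^{-1}] concentrated in degree 0. -/
import Mathlib


variable (R : Type) [CommRing R]

/-! All the series rings appearing in the Čech complex of the nerve diagram at the vertex
`v = (1,1)` of the square `S = [−1,1]²` are realised as `R`-submodules of the module
`W = (ℤ × ℤ) → R` of "doubly infinite formal series `Σ f(i,j) x^i y^j`", cut out by support
conditions.  The maps of the Čech complex are the inclusions of these submodules (with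
simplicial signs), so sums and differences are taken inside `W`. -/

/-- `A_v = R[x⁻¹,y⁻¹]`. -/
def PA (f : ℤ × ℤ → R) : Prop :=
  {p : ℤ × ℤ | f p ≠ 0}.Finite ∧ ∀ i j : ℤ, 0 < i ∨ 0 < j → f (i, j) = 0
/-- `A⟨v⟩ = R[[x⁻¹,y⁻¹]]`. -/
def Pv (f : ℤ × ℤ → R) : Prop := ∀ i j : ℤ, 0 < i ∨ 0 < j → f (i, j) = 0
/-- `A⟨S⟩ = R[x,x⁻¹,y,y⁻¹]`. -/
def PS (f : ℤ × ℤ → R) : Prop := {p : ℤ × ℤ | f p ≠ 0}.Finite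
/-- `A⟨e_t⟩ = R[x,x⁻¹][[y⁻¹]]`. -/
def Pet (f : ℤ × ℤ → R) : Prop :=
  (∀ i j : ℤ, 0 < j → f (i, j) = 0) ∧ ∀ j : ℤ, {i : ℤ | f (i, j) ≠ 0}.Finite
/-- `A⟨e_r⟩ = R[y,y⁻¹][[x⁻¹]]`. -/
def Per (f : ℤ × ℤ → R) : Prop :=
  (∀ i j : ℤ, 0 < i → f (i, j) = 0) ∧ ∀ i : ℤ, {j : ℤ | f (i, j) ≠ 0}.Finite
/-- `A⟨v,S⟩ = R((x⁻¹,y⁻¹)) = R[[x⁻¹,y⁻¹]][(xy)⁻¹]`. -/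
def PvS (f : ℤ × ℤ → R) : Prop := ∃ k : ℤ, ∀ i j : ℤ, k < i ∨ k < j → f (i, j) = 0
/-- `A⟨e_t,S⟩ = R[x,x⁻¹]((y⁻¹))`. -/
def PetS (f : ℤ × ℤ → R) : Prop :=
  (∃ k : ℤ, ∀ i j : ℤ, k < j → f (i, j) = 0) ∧ ∀ j : ℤ, {i : ℤ | f (i, j) ≠ 0}.Finite
/-- `A⟨e_r,S⟩ = R[y,y⁻¹]((x⁻¹))`. -/
def PerS (f : ℤ × ℤ → R) : Prop :=
  (∃ k : ℤ, ∀ i j : ℤ, k < i → f (i, j) = 0) ∧ ∀ i : ℤ, {j : ℤ | f (i, j) ≠ 0}.Finite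
/-- `A⟨v,e_t⟩ = R((x⁻¹))[[y⁻¹]]`. -/
def Pvet (f : ℤ × ℤ → R) : Prop :=
  (∀ i j : ℤ, 0 < j → f (i, j) = 0) ∧ ∀ j : ℤ, ∃ k : ℤ, ∀ i : ℤ, k < i → f (i, j) = 0
/-- `A⟨v,e_r⟩ = R((y⁻¹))[[x⁻¹]]`. -/
def Pver (f : ℤ × ℤ → R) : Prop :=
  (∀ i j : ℤ, 0 < i → f (i, j) = 0) ∧ ∀ i : ℤ, ∃ k : ℤ, ∀ j : ℤ, k < j → f (i, j) = 0
/-- `A⟨v,e_t,S⟩ = R((x⁻¹))((y⁻¹))`. -/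
def PvetS (f : ℤ × ℤ → R) : Prop :=
  (∃ k : ℤ, ∀ i j : ℤ, k < j → f (i, j) = 0) ∧ ∀ j : ℤ, ∃ k : ℤ, ∀ i : ℤ, k < i → f (i, j) = 0
/-- `A⟨v,e_r,S⟩ = R((y⁻¹))((x⁻¹))`. -/
def PverS (f : ℤ × ℤ → R) : Prop :=
  (∃ k : ℤ, ∀ i j : ℤ, k < i → f (i, j) = 0) ∧ ∀ i : ℤ, ∃ k : ℤ, ∀ j : ℤ, k < j → f (i, j) = 0

/-- The canonical map `σ_v : A_v = R[x⁻¹,y⁻¹] → Čech(D_v)` into the Čech complex of the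
diagram of Novikov rings indexed by the nerve of the star of the vertex `v = (1,1)` of the
square is a quasi-isomorphism; i.e. the Čech complex
`A⟨v⟩ ⊕ A⟨e_t⟩ ⊕ A⟨e_r⟩ ⊕ A⟨S⟩ → A⟨v,e_t⟩ ⊕ A⟨v,e_r⟩ ⊕ A⟨v,S⟩ ⊕ A⟨e_t,S⟩ ⊕ A⟨e_r,S⟩ →
A⟨v,e_t,S⟩ ⊕ A⟨v,e_r,S⟩` (differentials the signed inclusions) has cohomology
`R[x⁻¹,y⁻¹]`, concentrated in degree `0`.  The three assertions are: the kernel of `d⁰`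
(consisting of quadruples `(f,f,f,f)` with `f` in the intersection of the four degree-`0`
rings) is exactly the image of `σ_v`; kernel equals image in degree `1`; and `d¹` is
surjective. -/
theorem cech_nerve_vertex_quasiIso :
    -- `H⁰ = A_v`: the intersection of the four rings in degree 0 is `R[x⁻¹,y⁻¹]`:
    (∀ f : ℤ × ℤ → R, Pv R f → Pet R f → Per R f → PS R f → PA R f) ∧
    -- exactness in degree 1:
    (∀ b₁ b₂ b₃ b₄ b₅ : ℤ × ℤ → R,
      Pvet R b₁ → Pver R b₂ → PvS R b₃ → PetS R b₄ → PerS R b₅ →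
      b₄ - b₃ + b₁ = 0 → b₅ - b₃ + b₂ = 0 →
      ∃ aᵥ aₜ aᵣ aₛ : ℤ × ℤ → R, Pv R aᵥ ∧ Pet R aₜ ∧ Per R aᵣ ∧ PS R aₛ ∧
        b₁ = aₜ - aᵥ ∧ b₂ = aᵣ - aᵥ ∧ b₃ = aₛ - aᵥ ∧ b₄ = aₛ - aₜ ∧ b₅ = aₛ - aᵣ) ∧
    -- surjectivity in degree 2:
    (∀ c₁ c₂ : ℤ × ℤ → R, PvetS R c₁ → PverS R c₂ →
      ∃ b₁ b₂ b₃ b₄ b₅ : ℤ × ℤ → R,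
        Pvet R b₁ ∧ Pver R b₂ ∧ PvS R b₃ ∧ PetS R b₄ ∧ PerS R b₅ ∧
        c₁ = b₄ - b₃ + b₁ ∧ c₂ = b₅ - b₃ + b₂) := by
  refine ⟨?_, ?_, ?_⟩
  · -- degree 0
    intro f hv _ _ hS
    exact ⟨hS, hv⟩
  · -- degree 1
    intro b₁ b₂ b₃ b₄ b₅ h1 h2 h3 h4 h5 e1 e2
    have hb4 : b₄ = b₃ - b₁ := by linear_combination e1
    have hb5 : b₅ = b₃ - b₂ := by linear_combination e2
    set aᵥ : ℤ × ℤ → R := fun p => if p.1 ≤ 0 ∧ p.2 ≤ 0 then -b₃ p else 0 with hav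
    have hav' : ∀ p : ℤ × ℤ, aᵥ p = if p.1 ≤ 0 ∧ p.2 ≤ 0 then -b₃ p else 0 := fun p => rfl
    refine ⟨aᵥ, b₁ + aᵥ, b₂ + aᵥ, b₃ + aᵥ, ?_, ⟨?_, ?_⟩, ⟨?_, ?_⟩, ?_, ?_, ?_, ?_, ?_, ?_⟩
    · -- Pv aᵥ
      intro i j h
      rw [hav']
      apply if_neg
      rintro ⟨h1', h2'⟩; rcases h with h | h <;> omega
    · -- Pet (b₁ + aᵥ) : vanishing for 0 < j
      intro i j hj
      have : aᵥ (i, j) = 0 := by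
        rw [hav']; apply if_neg; rintro ⟨-, h⟩; omega
      simp [h1.1 i j hj, this]
    · -- Pet (b₁ + aᵥ) : finite rows
      intro j
      obtain ⟨k, hk⟩ := h1.2 j
      apply Set.Finite.subset ((Set.finite_Ioc 0 k).union (h4.2 j))
      intro i hi
      simp only [Set.mem_setOf_eq, Pi.add_apply] at hi
      by_cases hq : i ≤ 0 ∧ j ≤ 0
      · right
        have ha : aᵥ (i, j) = -b₃ (i, j) := if_pos hq
        simp only [Set.mem_setOf_eq, hb4, Pi.sub_apply]
        intro h0
        apply hi
        have : b₃ (i, j) = b₁ (i, j) := sub_eq_zero.mp h0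
        rw [ha, this]; ring
      · left
        have ha : aᵥ (i, j) = 0 := if_neg hq
        rw [ha, add_zero] at hi
        have hipos : 0 < i := by
          by_contra h0
          push_neg at h0
          exact hi (h1.1 i j (by omega))
        exact ⟨hipos, by by_contra h0; push_neg at h0; exact hi (hk i h0)⟩
    · -- Per (b₂ + aᵥ) : vanishing for 0 < i
      intro i j hi
      have : aᵥ (i, j) = 0 := by
        rw [hav']; apply if_neg; rintro ⟨h, -⟩; omega
      simp [h2.1 i j hi, this]
    · -- Per (b₂ + aᵥ) : finite columns
      intro i
      obtain ⟨k, hk⟩ := h2.2 i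
      apply Set.Finite.subset ((Set.finite_Ioc 0 k).union (h5.2 i))
      intro j hj
      simp only [Set.mem_setOf_eq, Pi.add_apply] at hj
      by_cases hq : i ≤ 0 ∧ j ≤ 0
      · right
        have ha : aᵥ (i, j) = -b₃ (i, j) := if_pos hq
        simp only [Set.mem_setOf_eq, hb5, Pi.sub_apply]
        intro h0
        apply hj
        have : b₃ (i, j) = b₂ (i, j) := sub_eq_zero.mp h0
        rw [ha, this]; ring
      · left
        have ha : aᵥ (i, j) = 0 := if_neg hq
        rw [ha, add_zero] at hj
        have hjpos : 0 < j := by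
          by_contra h0
          push_neg at h0
          exact hj (h2.1 i j (by omega))
        exact ⟨hjpos, by by_contra h0; push_neg at h0; exact hj (hk j h0)⟩
    · -- PS (b₃ + aᵥ)
      obtain ⟨k, hk⟩ := h3
      have fin1 : (⋃ i ∈ Set.Ioc (0:ℤ) k, ({i} ×ˢ {j | b₅ (i, j) ≠ 0})).Finite :=
        Set.Finite.biUnion (Set.finite_Ioc 0 k)
          fun i _ => (Set.finite_singleton i).prod (h5.2 i)
      have fin2 : (⋃ j ∈ Set.Ioc (0:ℤ) k, ({i | b₄ (i, j) ≠ 0} ×ˢ {j})).Finite :=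
        Set.Finite.biUnion (Set.finite_Ioc 0 k)
          fun j _ => (h4.2 j).prod (Set.finite_singleton j)
      apply Set.Finite.subset (fin1.union fin2)
      rintro ⟨i, j⟩ hij
      simp only [Set.mem_setOf_eq, Pi.add_apply] at hij
      by_cases hq : i ≤ 0 ∧ j ≤ 0
      · exfalso
        apply hij
        have ha : aᵥ (i, j) = -b₃ (i, j) := if_pos hq
        rw [ha]; ring
      · have ha : aᵥ (i, j) = 0 := if_neg hq
        rw [ha, add_zero] at hij
        by_cases hi : 0 < i
        · left
          have hik : i ≤ k := by
            by_contra h0; push_neg at h0; exact hij (hk i j (Or.inl h0))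
          have hb5ne : b₅ (i, j) ≠ 0 := by
            rw [hb5]
            simpa [h2.1 i j hi] using hij
          simp only [Set.mem_iUnion, Set.mem_prod, Set.mem_singleton_iff, Set.mem_setOf_eq]
          exact ⟨i, ⟨hi, hik⟩, rfl, hb5ne⟩
        · right
          push_neg at hi
          have hj : 0 < j := by omega
          have hjk : j ≤ k := by
            by_contra h0; push_neg at h0; exact hij (hk i j (Or.inr h0))
          have hb4ne : b₄ (i, j) ≠ 0 := by
            rw [hb4]
            simpa [h1.1 i j hj] using hij
          simp only [Set.mem_iUnion, Set.mem_prod, Set.mem_singleton_iff, Set.mem_setOf_eq]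
          exact ⟨j, ⟨hj, hjk⟩, hb4ne, rfl⟩
    · ring
    · ring
    · ring
    · rw [hb4]; ring
    · rw [hb5]; ring
  · -- degree 2
    intro c₁ c₂ hc₁ hc₂
    obtain ⟨⟨k₁, hk₁⟩, h1'⟩ := hc₁
    obtain ⟨⟨k₂, hk₂⟩, h2'⟩ := hc₂
    choose g₁ hg₁ using h1'
    choose g₂ hg₂ using h2'
    set K₁ : ℤ :=
      max k₁ (((Finset.Ioc (0:ℤ) k₁).sup fun j => (g₁ j).toNat : ℕ) : ℤ) with hK₁
    set K₂ : ℤ :=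
      max k₂ (((Finset.Ioc (0:ℤ) k₂).sup fun i => (g₂ i).toNat : ℕ) : ℤ) with hK₂
    have hz₁ : ∀ i j : ℤ, 0 < j → (K₁ < i ∨ K₁ < j) → c₁ (i, j) = 0 := by
      intro i j hj h
      by_cases hjk : k₁ < j
      · exact hk₁ i j hjk
      · push_neg at hjk
        have hmem : j ∈ Finset.Ioc (0:ℤ) k₁ := Finset.mem_Ioc.mpr ⟨hj, hjk⟩
        have hle : g₁ j ≤ K₁ := by
          calc g₁ j ≤ ((g₁ j).toNat : ℤ) := Int.self_le_toNat _
            _ ≤ (((Finset.Ioc (0:ℤ) k₁).sup fun j => (g₁ j).toNat : ℕ) : ℤ) :=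
                Nat.cast_le.mpr (Finset.le_sup (f := fun j => (g₁ j).toNat) hmem)
            _ ≤ K₁ := le_max_right _ _
        rcases h with h | h
        · exact hg₁ j i (by omega)
        · omega
    have hz₂ : ∀ i j : ℤ, 0 < i → (K₂ < i ∨ K₂ < j) → c₂ (i, j) = 0 := by
      intro i j hi h
      by_cases hik : k₂ < i
      · exact hk₂ i j hik
      · push_neg at hik
        have hmem : i ∈ Finset.Ioc (0:ℤ) k₂ := Finset.mem_Ioc.mpr ⟨hi, hik⟩
        have hle : g₂ i ≤ K₂ := by
          calc g₂ i ≤ ((g₂ i).toNat : ℤ) := Int.self_le_toNat _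
            _ ≤ (((Finset.Ioc (0:ℤ) k₂).sup fun i => (g₂ i).toNat : ℕ) : ℤ) :=
                Nat.cast_le.mpr (Finset.le_sup (f := fun i => (g₂ i).toNat) hmem)
            _ ≤ K₂ := le_max_right _ _
        rcases h with h | h
        · omega
        · exact hg₂ i j (by omega)
    set t₁ : ℤ × ℤ → R := fun p => if 0 < p.2 then c₁ p else 0 with ht₁
    set t₂ : ℤ × ℤ → R := fun p => if 0 < p.1 then c₂ p else 0 with ht₂
    have ht₁' : ∀ p : ℤ × ℤ, t₁ p = if 0 < p.2 then c₁ p else 0 := fun p => rfl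
    have ht₂' : ∀ p : ℤ × ℤ, t₂ p = if 0 < p.1 then c₂ p else 0 := fun p => rfl
    have ht₁z : ∀ i j : ℤ, K₁ < i ∨ K₁ < j → t₁ (i, j) = 0 := by
      intro i j h
      rw [ht₁']
      by_cases hj : 0 < j
      · rw [if_pos hj]; exact hz₁ i j hj h
      · exact if_neg hj
    have ht₂z : ∀ i j : ℤ, K₂ < i ∨ K₂ < j → t₂ (i, j) = 0 := by
      intro i j h
      rw [ht₂']
      by_cases hi : 0 < i
      · rw [if_pos hi]; exact hz₂ i j hi h
      · exact if_neg hi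
    refine ⟨c₁ - t₁, c₂ - t₂, -(t₁ + t₂), -t₂, -t₁, ⟨?_, ?_⟩, ⟨?_, ?_⟩, ?_, ⟨?_, ?_⟩,
      ⟨?_, ?_⟩, by ring, by ring⟩
    · -- Pvet (c₁ - t₁): vanish for 0 < j
      intro i j hj
      simp [ht₁' (i, j), hj]
    · -- Pvet: rows bounded above
      intro j
      refine ⟨g₁ j, fun i hi => ?_⟩
      have h0 : c₁ (i, j) = 0 := hg₁ j i hi
      simp [ht₁' (i, j), h0]
    · -- Pver (c₂ - t₂): vanish for 0 < i
      intro i j hi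
      simp [ht₂' (i, j), hi]
    · -- Pver: columns bounded above
      intro i
      refine ⟨g₂ i, fun j hj => ?_⟩
      have h0 : c₂ (i, j) = 0 := hg₂ i j hj
      simp [ht₂' (i, j), h0]
    · -- PvS (-(t₁ + t₂))
      refine ⟨max K₁ K₂, fun i j h => ?_⟩
      have e1 : t₁ (i, j) = 0 := ht₁z i j (by rcases h with h | h; exacts [Or.inl (by omega), Or.inr (by omega)])
      have e2 : t₂ (i, j) = 0 := ht₂z i j (by rcases h with h | h; exacts [Or.inl (by omega), Or.inr (by omega)])
      simp [e1, e2]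
    · -- PetS (-t₂): bounded in j
      refine ⟨K₂, fun i j hj => ?_⟩
      simp [ht₂z i j (Or.inr hj)]
    · -- PetS (-t₂): finite rows
      intro j
      apply Set.Finite.subset (Set.finite_Ioc (0:ℤ) k₂)
      intro i hi
      simp only [Set.mem_setOf_eq, Pi.neg_apply, ne_eq, neg_eq_zero] at hi
      rw [ht₂' (i, j)] at hi
      by_cases h0 : 0 < i
      · rw [if_pos h0] at hi
        refine ⟨h0, ?_⟩
        by_contra hh; push_neg at hh
        exact hi (hk₂ i j hh)
      · rw [if_neg h0] at hi; exact absurd rfl hi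
    · -- PerS (-t₁): bounded in i
      refine ⟨K₁, fun i j hi => ?_⟩
      simp [ht₁z i j (Or.inl hi)]
    · -- PerS (-t₁): finite columns
      intro i
      apply Set.Finite.subset (Set.finite_Ioc (0:ℤ) k₁)
      intro j hj
      simp only [Set.mem_setOf_eq, Pi.neg_apply, ne_eq, neg_eq_zero] at hj
      rw [ht₁' (i, j)] at hj
      by_cases h0 : 0 < j
      · rw [if_pos h0] at hj
        refine ⟨h0, ?_⟩
        by_contra hh; push_neg at hh
        exact hj (hk₁ i j hh)
      · rw [if_neg h0] at hj; exact absurd rfl hj
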